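/- arXiv:math/0606632 — 2 statements merged into one kernel-verified Lean document; each statement's English description precedes it below -/
import Mathlib

section
/- Let G be a finite simple graph. Then χ(G) ≤ (1/2)(ω(G) + (|G| + Δ(G) + 1)/2), where χ(G) is the chromatic number, ω(G) the clique number, Δ(G) the maximum degree, and |G| the number of vertices of G. -/
/-!
Induction on `|G|`. If `α(G) ≥ 4`, deleting an independent 4-set costs one colour and four
vertices. If `α(G) = 3`, a maximum independent set dominates the rest of the graph, so deleting it
also lowers `Δ`. If `α(G) ≤ 2`, take a maximum matching of `Gᶜ` leaving `u` vertices unmatched: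
one colour per matched pair gives `2χ ≤ n + u`, and exchanges along short augmenting paths in the
triangle-free graph `Gᶜ` yield two cliques of `G` of total size at least `2u + (n - 1 - Δ)`.
-/

open Finset

theorem Function.Involutive.two_mul_card_le_apply_eq {α : Type*} [Fintype α] [LinearOrder α]
    {f : α → α} (hf : Function.Involutive f) :
    2 * #{v | v ≤ f v} = Fintype.card α + #{v | f v = v} := by
  have hle : #{v | v ≤ f v} = #{v | v < f v} + #{v | f v = v} := by
    rw [← card_union_of_disjoint (disjoint_filter.2 fun v _ h => h.ne')]
    congr 1; ext v; simp [le_iff_lt_or_eq, eq_comm]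
  have hswap : #{v | f v < v} = #{v | v < f v} :=
    card_nbij' f f (fun v hv => by simp_all [hf v]) (fun v hv => by simp_all [hf v])
      (fun v _ => hf v) (fun v _ => hf v)
  have hsplit := card_filter_add_card_filter_not (s := univ) (fun v => v ≤ f v)
  simp only [not_le, card_univ] at hsplit
  omega

theorem Finset.card_compl_coe_add_card {α : Type*} [Fintype α] [DecidableEq α] (s : Finset α) :
    Fintype.card ↥((s : Set α)ᶜ) + #s = Fintype.card α := by
  rw [Fintype.card_compl_set]
  simpa using Nat.sub_add_cancel (card_le_univ s)

namespace SimpleGraph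

variable {V : Type*} {G H : SimpleGraph V} {f : V → V}

/-- A matching of `H`, encoded as the involution exchanging the two ends of each matching edge;
the unmatched vertices are its fixed points. -/
structure IsMatchingInvolution (H : SimpleGraph V) (f : V → V) : Prop where
  involutive : Function.Involutive f
  adj_apply : ∀ v, f v ≠ v → H.Adj v (f v)

section Finite

variable [Fintype V] [DecidableEq V]

theorem IsMatchingInvolution.two_mul_chromaticNumber_toNat_le (hf : Gᶜ.IsMatchingInvolution f) :
    2 * G.chromaticNumber.toNat ≤ Fintype.card V + #{v | f v = v} := by
  let _ : LinearOrder V := LinearOrder.lift' _ (Fintype.equivFin V).injective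
  let R : Finset V := {v | v ≤ f v}
  have hR v : min v (f v) ∈ R := by
    simp only [R, mem_filter, mem_univ, true_and]
    rcases le_total v (f v) with h | h
    · rwa [min_eq_left h]
    · rwa [min_eq_right h, hf.involutive]
  let C : G.Coloring R := Coloring.mk (fun v => ⟨min v (f v), hR v⟩) fun {v w} hvw heq => by
    have hv := hf.adj_apply v
    have hw := hf.adj_apply w
    have := hf.involutive v
    have := hf.involutive w
    simp only [Subtype.mk.injEq, min_def] at heq
    simp only [compl_adj] at hv hw
    grind [hvw.ne, G.adj_symm hvw]
  have hχ := ENat.toNat_le_of_le_natCast C.colorable.chromaticNumber_le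
  rw [Fintype.card_coe] at hχ
  have hcount : 2 * #R = Fintype.card V + #{v | f v = v} := by
    convert hf.involutive.two_mul_card_le_apply_eq
  omega

structure IsMaximumMatchingInvolution (H : SimpleGraph V) (f : V → V) : Prop
    extends H.IsMatchingInvolution f where
  card_fixed_le : ∀ g, H.IsMatchingInvolution g → #{v | f v = v} ≤ #{v | g v = v}

theorem exists_isMaximumMatchingInvolution (H : SimpleGraph V) :
    ∃ f, H.IsMaximumMatchingInvolution f := by
  obtain ⟨f, hf, hmin⟩ := (measure fun g : V → V => #{v | g v = v}).wf.has_min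
    {g | H.IsMatchingInvolution g} ⟨id, fun _ => rfl, fun _ h => absurd rfl h⟩
  exact ⟨f, hf, fun g hg => not_lt.1 (hmin g hg)⟩

namespace IsMaximumMatchingInvolution

variable (hf : H.IsMaximumMatchingInvolution f)
include hf

theorem not_adj_of_fixed {x y : V} (hx : f x = x) (hy : f y = y) : ¬H.Adj x y := by
  intro hxy
  let g v := if v = x then y else if v = y then x else f v
  have hg : H.IsMatchingInvolution g := by
    constructor
    · intro v
      have := hf.involutive v
      grind
    · intro v hv
      have := hf.adj_apply v
      grind [H.adj_symm hxy]
  have hfix : ({v | g v = v} : Finset V) ⊆ ({v | f v = v} : Finset V).erase x := by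
    intro v; simp only [mem_filter, mem_univ, true_and, mem_erase]; grind [hxy.ne]
  have := (hf.card_fixed_le g hg).trans (card_le_card hfix)
  exact this.not_gt (card_erase_lt_of_mem (by simpa using hx))

theorem isIndepSet_fixed : H.IsIndepSet {v | f v = v} :=
  fun _ hx _ hy _ => hf.not_adj_of_fixed hx hy

theorem apply_ne_self_of_adj_fixed {x a : V} (hx : f x = x) (ha : H.Adj x a) : f a ≠ a :=
  fun h => hf.not_adj_of_fixed hx h ha

/-- Re-match `a` with the unmatched vertex `x`, which frees the former partner `f a`. -/
theorem exists_rotate {x a : V} (hx : f x = x) (ha : H.Adj x a) :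
    ∃ g, H.IsMaximumMatchingInvolution g ∧ g (f a) = f a ∧
      ∀ v, v ≠ x → v ≠ a → v ≠ f a → g v = f v := by
  have hfa := hf.apply_ne_self_of_adj_fixed hx ha
  have hffa := hf.involutive a
  let g v := if v = x then a else if v = a then x else if v = f a then f a else f v
  have hg : H.IsMatchingInvolution g := by
    constructor
    · intro v
      have := hf.involutive v
      grind
    · intro v hv
      have := hf.adj_apply v
      grind [H.adj_symm ha, ha.ne]
  have hfix : ({v | g v = v} : Finset V) = insert (f a) (({v | f v = v} : Finset V).erase x) := by
    ext v; simp only [mem_filter, mem_univ, true_and, mem_erase, mem_insert]; grind [ha.ne]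
  have hcard : #{v | g v = v} = #{v | f v = v} := by
    rw [hfix, card_insert_of_notMem (by simp [hffa, hfa.symm]),
      card_erase_add_one (by simpa using hx)]
  exact ⟨g, ⟨hg, fun g' hg' => hcard ▸ hf.card_fixed_le g' hg'⟩, by grind, fun v _ _ _ => by grind⟩

theorem not_adj_of_augmenting_path₃ {x y a : V} (hx : f x = x) (hy : f y = y) (hxy : x ≠ y)
    (ha : H.Adj x a) : ¬H.Adj (f a) y := by
  have hfa := hf.apply_ne_self_of_adj_fixed hx ha
  obtain ⟨g, hg, hgfa, hgv⟩ := hf.exists_rotate hx ha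
  have hgy : g y = y := by
    rw [hgv y hxy.symm (by grind) (by grind [hf.involutive a]), hy]
  exact hg.not_adj_of_fixed hgfa hgy

theorem not_adj_of_augmenting_path₅ {x y a c : V} (hx : f x = x) (hy : f y = y) (hxy : x ≠ y)
    (ha : H.Adj x a) (hc : H.Adj (f a) c) : ¬H.Adj (f c) y := by
  intro hcy
  have hfa := hf.apply_ne_self_of_adj_fixed hx ha
  obtain ⟨g, hg, hgfa, hgv⟩ := hf.exists_rotate hx ha
  have hgy : g y = y := by
    rw [hgv y hxy.symm (by grind) (by grind [hf.involutive a]), hy]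
  by_cases hcx : c = x
  · exact hf.not_adj_of_fixed hx hy (by rwa [hcx, hx] at hcy)
  by_cases hca : c = a
  · exact hf.not_adj_of_augmenting_path₃ hx hy hxy ha (hca ▸ hcy)
  have hgc : g c = f c := hgv c hcx hca hc.ne.symm
  exact hg.not_adj_of_augmenting_path₃ hgfa hgy (by grind [hf.involutive a]) hc (hgc ▸ hcy)

end IsMaximumMatchingInvolution

section TriangleFree

variable {x : V} (hH : H.CliqueFree 3) (hf : H.IsMaximumMatchingInvolution f) (hx : f x = x)
include hH hf hx

theorem IsMaximumMatchingInvolution.not_adj_apply_of_adj {y a : V} (hy : f y = y)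
    (ha : H.Adj x a) : ¬H.Adj y (f a) := by
  obtain rfl | hxy := eq_or_ne x y
  · intro hxfa
    have hafa := hf.adj_apply a (hf.apply_ne_self_of_adj_fixed hx ha)
    exact isIndepSet_neighborSet_of_triangleFree H hH x ha hxfa hafa.ne hafa
  · exact fun h => hf.not_adj_of_augmenting_path₃ hx hy hxy ha h.symm

theorem IsMaximumMatchingInvolution.card_fixed_add_card_le_indepNum [DecidableRel H.Adj]
    {C : Finset V} (hC : C ⊆ H.neighborFinset x) (hCf : H.IsIndepSet (f '' C)) :
    #{v | f v = v} + #C ≤ H.indepNum := by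
  have hdisj : Disjoint ({v | f v = v} : Finset V) (C.image f) := by
    rw [Finset.disjoint_left]
    simp only [mem_filter, mem_univ, true_and, mem_image, not_exists, not_and]
    rintro _ hv a ha rfl
    exact hf.apply_ne_self_of_adj_fixed hx ((mem_neighborFinset ..).1 (hC ha))
      (by rw [← hv, hf.involutive])
  have hind : H.IsIndepSet (↑(({v | f v = v} : Finset V) ∪ C.image f)) := by
    rw [coe_union, coe_image, coe_filter_univ]
    refine Set.pairwise_union.2 ⟨hf.isIndepSet_fixed, hCf, ?_⟩
    rintro y hy _ ⟨a, ha, rfl⟩ -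
    have := hf.not_adj_apply_of_adj hH hx hy ((mem_neighborFinset ..).1 (hC ha))
    exact ⟨this, fun h => this h.symm⟩
  have := hind.card_le_indepNum
  rwa [card_union_of_disjoint hdisj, card_image_of_injective _ hf.involutive.injective] at this

theorem IsMaximumMatchingInvolution.card_fixed_add_card_le_indepNum_add_one [DecidableRel H.Adj]
    {D : Finset V} (hD : D ⊆ H.neighborFinset x)
    (hDf : ∀ a ∈ D, ∃ a' ∈ H.neighborFinset x, H.Adj (f a') (f a)) :
    #{v | f v = v} + #D ≤ H.indepNum + 1 := by
  have hxU : x ∈ ({v | f v = v} : Finset V) := by simpa using hx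
  have hdisj : Disjoint (({v | f v = v} : Finset V).erase x) D := by
    rw [Finset.disjoint_left]
    intro v hv hvD
    exact hf.apply_ne_self_of_adj_fixed hx ((mem_neighborFinset ..).1 (hD hvD))
      (by simpa using mem_of_mem_erase hv)
  have hind : H.IsIndepSet (↑(({v | f v = v} : Finset V).erase x ∪ D)) := by
    rw [coe_union]
    refine Set.pairwise_union.2 ⟨hf.isIndepSet_fixed.mono (by simp), ?_, ?_⟩
    · exact (isIndepSet_neighborSet_of_triangleFree H hH x).mono
        (fun a ha => (mem_neighborFinset ..).1 (hD ha))
    · rintro y hy a ha -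
      simp only [coe_erase, coe_filter_univ, Set.mem_sdiff, Set.mem_ofPred_eq,
        Set.mem_singleton_iff] at hy
      obtain ⟨a', ha', hadj⟩ := hDf a ha
      have := hf.not_adj_of_augmenting_path₅ hx hy.1 (Ne.symm hy.2)
        ((mem_neighborFinset ..).1 ha') hadj
      rw [hf.involutive] at this
      exact ⟨fun h => this h.symm, this⟩
  have := hind.card_le_indepNum
  rw [card_union_of_disjoint hdisj, card_erase_of_mem hxU] at this
  have := card_pos.2 ⟨x, hxU⟩
  omega

theorem IsMaximumMatchingInvolution.two_mul_card_fixed_add_degree_le [DecidableRel H.Adj] :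
    2 * #{v | f v = v} + H.degree x ≤ 2 * H.indepNum := by
  rw [← card_neighborFinset_eq_degree]
  set A := H.neighborFinset x
  set A₀ : Finset V := {a ∈ A | ∃ a' ∈ A, H.Adj (f a') (f a)}
  have hindep : ∀ C ⊆ A, (∀ a ∈ C, ∀ a' ∈ C, a ∈ A₀ → a' ∈ A₀ → a = a') →
      H.IsIndepSet (f '' C) := by
    rintro C hC hC₀ _ ⟨a, ha, rfl⟩ _ ⟨a', ha', rfl⟩ hne hadj
    exact hne <| congrArg f <| hC₀ a ha a' ha' (mem_filter.2 ⟨hC ha, a', hC ha', hadj.symm⟩)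
      (mem_filter.2 ⟨hC ha', a, hC ha, hadj⟩)
  have hU : #{v | f v = v} ≤ H.indepNum := by
    have := hf.isIndepSet_fixed
    rw [← coe_filter_univ] at this
    exact this.card_le_indepNum
  have hA₀A : A₀ ⊆ A := filter_subset _ _
  -- With `U` the unmatched vertices, the two independent sets are `U` and `U ∪ f(A)` if
  -- `A₀ = ∅`, and `(U \ {x}) ∪ A₀` and `U ∪ f(A \ A₀) ∪ {f a₀}` otherwise.
  rcases A₀.eq_empty_or_nonempty with hA₀ | ⟨a₀, ha₀⟩
  · have := hf.card_fixed_add_card_le_indepNum hH hx (C := A) subset_rfl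
      (hindep A subset_rfl (by simp [hA₀]))
    omega
  · have h₀ := hf.card_fixed_add_card_le_indepNum_add_one hH hx hA₀A
      (fun a ha => (mem_filter.1 ha).2)
    have hC : insert a₀ (A \ A₀) ⊆ A := insert_subset (hA₀A ha₀) sdiff_subset
    have h₁ := hf.card_fixed_add_card_le_indepNum hH hx hC (hindep _ hC (by grind))
    rw [card_insert_of_notMem (by simp [ha₀]), card_sdiff_of_subset hA₀A] at h₁
    have := card_le_card hA₀A
    omega

end TriangleFree

theorem IsMaximumMatchingInvolution.exists_two_mul_card_fixed_add_degree_le [Nonempty V]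
    [DecidableRel H.Adj] (hH : H.CliqueFree 3) (hf : H.IsMaximumMatchingInvolution f) :
    ∃ x, 2 * #{v | f v = v} + H.degree x ≤ 2 * H.indepNum := by
  by_cases hU : ∃ x, f x = x
  · obtain ⟨x, hx⟩ := hU
    exact ⟨x, hf.two_mul_card_fixed_add_degree_le hH hx⟩
  obtain ⟨x⟩ := ‹Nonempty V›
  have hU₀ : #{v | f v = v} = 0 := by simpa using hU
  have hN := isIndepSet_neighborSet_of_triangleFree H hH x
  rw [← coe_neighborFinset] at hN
  have := hN.card_le_indepNum
  rw [card_neighborFinset_eq_degree] at this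
  exact ⟨x, by omega⟩

theorem four_mul_chromaticNumber_toNat_le_of_indepSetFree [DecidableRel G.Adj]
    (hG : G.IndepSetFree 3) :
    4 * G.chromaticNumber.toNat ≤ 2 * G.cliqueNum + Fintype.card V + G.maxDegree + 1 := by
  cases isEmpty_or_nonempty V
  · simp [chromaticNumber_eq_zero_of_isEmpty]
  obtain ⟨f, hf⟩ := Gᶜ.exists_isMaximumMatchingInvolution
  obtain ⟨x, hx⟩ := hf.exists_two_mul_card_fixed_add_degree_le ((cliqueFree_compl G).2 hG)
  have hχ := hf.two_mul_chromaticNumber_toNat_le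
  rw [indepNum_compl, degree_compl] at hx
  have := G.degree_le_maxDegree x
  have := G.degree_lt_card_verts x
  omega

end Finite

theorem Colorable.succ_of_induce_compl {s : Set V} (hs : G.IsIndepSet s) {k : ℕ}
    (hk : (G.induce sᶜ).Colorable k) : G.Colorable (k + 1) := by
  classical
  obtain ⟨C⟩ := hk
  let C' : G.Coloring (Option (Fin k)) := Coloring.mk
    (fun v => if h : v ∈ s then none else some (C ⟨v, h⟩)) fun {v w} hvw => by
      by_cases hv : v ∈ s <;> by_cases hw : w ∈ s <;> simp only [hv, hw, dif_pos]
      · exact absurd hvw (hs hv hw hvw.ne)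
      · simp
      · simp
      · exact fun h => C.valid (by simpa using hvw) (Option.some_injective _ h)
  simpa using C'.colorable

theorem chromaticNumber_toNat_le_induce_compl_add_one [Finite V] {s : Set V}
    (hs : G.IsIndepSet s) :
    G.chromaticNumber.toNat ≤ (G.induce sᶜ).chromaticNumber.toNat + 1 :=
  ENat.toNat_le_of_le_natCast
    ((colorable_chromaticNumber_of_fintype _).succ_of_induce_compl hs).chromaticNumber_le

theorem maxDegree_induce_compl_add_one_le [Fintype V] [DecidableRel G.Adj]
    {s : Set V} [DecidablePred (· ∈ s)] [Nonempty ↥sᶜ]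
    (hs : ∀ v ∉ s, ∃ w ∈ s, G.Adj v w) :
    (G.induce sᶜ).maxDegree + 1 ≤ G.maxDegree := by
  classical
  obtain ⟨v, hv⟩ := (G.induce sᶜ).exists_maximal_degree_vertex
  obtain ⟨w, hws, hvw⟩ := hs v v.2
  let N := ((G.induce sᶜ).neighborFinset v).map (Function.Embedding.subtype _)
  have hwN : w ∉ N := by simp [N, hws]
  have hsub : insert w N ⊆ G.neighborFinset v :=
    insert_subset (by simpa using hvw) fun u hu =>
      (mem_neighborFinset ..).2 (show G.Adj v u ∧ u ∉ s by simpa [N] using hu).1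
  have := card_le_card hsub
  rw [card_insert_of_notMem hwN, card_map, card_neighborFinset_eq_degree,
    card_neighborFinset_eq_degree, ← hv] at this
  exact this.trans (G.degree_le_maxDegree v)

theorem four_mul_chromaticNumber_toNat_le_of_induce_compl [Fintype V] [DecidableEq V]
    [DecidableRel G.Adj] {S : Finset V} (hS : G.IsIndepSet S)
    (hΔ : (G.induce (↑S)ᶜ).maxDegree + 4 ≤ #S + G.maxDegree)
    (h : 4 * (G.induce (↑S)ᶜ).chromaticNumber.toNat ≤ 2 * (G.induce (↑S)ᶜ).cliqueNum +
      Fintype.card ↥((S : Set V)ᶜ) + (G.induce (↑S)ᶜ).maxDegree + 1) :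
    4 * G.chromaticNumber.toNat ≤ 2 * G.cliqueNum + Fintype.card V + G.maxDegree + 1 := by
  have hχ := chromaticNumber_toNat_le_induce_compl_add_one hS
  have hω := G.cliqueNum_induce_le (↑S)ᶜ
  have := card_compl_coe_add_card S
  omega

theorem indepSetFree_of_indepNum_lt [Finite V] {n : ℕ} (h : G.indepNum < n) :
    G.IndepSetFree n := fun t ht => by
  have := ht.isIndepSet.card_le_indepNum
  rw [ht.card_eq] at this
  omega

theorem exists_adj_of_isNIndepSet_indepNum [Finite V] [DecidableEq V] {S : Finset V}
    (hS : G.IsNIndepSet G.indepNum S) {v : V} (hv : v ∉ S) : ∃ w ∈ S, G.Adj v w := by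
  by_contra! hvS
  have hind : G.IsIndepSet (insert v S : Finset V) := by
    rw [coe_insert]
    exact Set.Pairwise.insert hS.isIndepSet fun w hw _ => ⟨hvS w hw, fun h => hvS w hw h.symm⟩
  have := hind.card_le_indepNum
  rw [card_insert_of_notMem hv, hS.card_eq] at this
  omega

theorem four_mul_chromaticNumber_toNat_le {V : Type*} [Fintype V] (G : SimpleGraph V)
    [DecidableRel G.Adj] :
    4 * G.chromaticNumber.toNat ≤ 2 * G.cliqueNum + Fintype.card V + G.maxDegree + 1 := by
  induction hn : Fintype.card V using Nat.strong_induction_on generalizing V with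
  | _ n ih =>
  subst hn
  classical
  have ih' (S : Finset V) (hS : S.Nonempty) := ih _ (by
    have := card_compl_coe_add_card S
    have := hS.card_pos
    omega) (G.induce (↑S)ᶜ) rfl
  obtain hα | hα | hα : G.indepNum < 3 ∨ G.indepNum = 3 ∨ 4 ≤ G.indepNum := by omega
  · exact four_mul_chromaticNumber_toNat_le_of_indepSetFree (indepSetFree_of_indepNum_lt hα)
  · obtain ⟨S, hS⟩ := G.exists_isNIndepSet_indepNum
    have hS₃ := hS.card_eq.trans hα
    rcases isEmpty_or_nonempty ↥((S : Set V)ᶜ) with hV | hV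
    · have hχ := chromaticNumber_toNat_le_induce_compl_add_one hS.isIndepSet
      rw [chromaticNumber_eq_zero_of_isEmpty (G := G.induce _), ENat.toNat_zero] at hχ
      have := card_compl_coe_add_card S
      rw [Fintype.card_eq_zero] at this
      omega
    · have := maxDegree_induce_compl_add_one_le (G := G) (s := S)
        fun v hv => exists_adj_of_isNIndepSet_indepNum hS hv
      exact four_mul_chromaticNumber_toNat_le_of_induce_compl hS.isIndepSet (by omega)
        (ih' S (card_pos.1 (by omega)))
  · obtain ⟨S, hS⟩ := G.exists_isNIndepSet_indepNum
    obtain ⟨T, hTS, hT⟩ := exists_subset_card_eq (hS.card_eq ▸ hα)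
    have := (Embedding.induce (G := G) ((T : Set V)ᶜ)).toCopy.maxDegree_mono
    exact four_mul_chromaticNumber_toNat_le_of_induce_compl
      (hS.isIndepSet.mono (coe_subset.2 hTS)) (by omega) (ih' T (card_pos.1 (by omega)))

end SimpleGraph

theorem chromatic_bound_clique_maxDegree_order_general {V : Type*} [Fintype V]
    (G : SimpleGraph V) [DecidableRel G.Adj] :
    (G.chromaticNumber.toNat : ℝ) ≤
      (1 / 2) * ((G.cliqueNum : ℝ) +
        ((Fintype.card V : ℝ) + (G.maxDegree : ℝ) + 1) / 2) := by
  have h : (4 * G.chromaticNumber.toNat : ℝ) ≤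
      2 * G.cliqueNum + Fintype.card V + G.maxDegree + 1 := by
    exact_mod_cast G.four_mul_chromaticNumber_toNat_le
  linarith

/-- Let `G` be a finite simple graph.  Then
`χ(G) ≤ (1/2) (ω(G) + (|G| + Δ(G) + 1)/2)`. -/
theorem chromatic_bound_clique_maxDegree_order {V : Type*} [Fintype V] [Nonempty V]
    (G : SimpleGraph V) [DecidableRel G.Adj] :
    (G.chromaticNumber.toNat : ℝ) ≤
      (1 / 2) * ((G.cliqueNum : ℝ) +
        ((Fintype.card V : ℝ) + (G.maxDegree : ℝ) + 1) / 2) :=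
  chromatic_bound_clique_maxDegree_order_general G
end

section
/- Let G be a finite simple graph, let K be a cut-set of vertices in the complement graph of G (i.e., a set of vertices whose removal disconnects the complement of G), and let H be an induced subgraph of G. Then χ(G) ≤ (1/2)(ω(G) + Δ(G) + 1) + (4χ(G[K]) + 3χ(H ∖ K) − |H ∖ K|)/4, where G[K] is the subgraph of G induced on K and H ∖ K is the subgraph of H induced on the vertices of H not in K. -/
/-- A finite set of vertices `K` is a cut-set of a simple graph `G` if the graph
induced on the remaining vertices is disconnected (there are two remaining
vertices joined by no path). -/
def SimpleGraph.IsCutSet {V : Type*} (G : SimpleGraph V) (K : Finset V) : Prop :=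
  ¬ (G.induce ((K : Set V)ᶜ)).Preconnected

/-!
Since `K` cuts the complement of `G`, the vertices outside `K` split into nonempty parts `A`, `B`
with every vertex of `A` adjacent to every vertex of `B`. Hence `χ(G) ≤ χ(K) + χ(A) + χ(B)`, and
across this join `ω(A) + ω(B) ≤ ω(G)`, `Δ(A) + |B| ≤ Δ(G)`, `Δ(B) + |A| ≤ Δ(G)` and
`χ(S ∩ A) + χ(S ∩ B) ≤ χ(S)`. The theorem follows by adding, for `W = A, B` and `S = (H ∖ K) ∩ W`,
the bound `4χ(W) + |S| ≤ 2ω(W) + Δ(W) + |W| + 1 + 3χ(S)`. To prove it, add to `S` greedily the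
vertices with fewer than `χ(S)` neighbours in `S`; afterwards each vertex of `W ∖ S` has at least
`χ(S)` neighbours in `S`, and it suffices to know `4χ ≤ 2ω + Δ + n + 1` for `W ∖ S`.

That bound is proved by removing maximum independent sets of size at least three. When the
independence number is at most two, a maximum matching of the complement colours the graph with
`(n + r)/2` colours, `r` the number of unmatched vertices; these form a clique, and a double count
of the non-edges between matched vertices enlarges it by some `q` with `n ≤ 2q + Δ + 1`.
-/

open Finset

namespace SimpleGraph

variable {V : Type*} (G : SimpleGraph V)

noncomputable def chromaticNumberOn (W : Finset V) : ℕ :=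
  (G.induce (W : Set V)).chromaticNumber.toNat

def IsColoringOn {β : Type*} (W : Finset V) (f : V → β) : Prop :=
  ∀ v ∈ W, ∀ w ∈ W, G.Adj v w → f v ≠ f w

variable {G}

theorem IsColoringOn.mono {β : Type*} {S W : Finset V} {f : V → β} (hf : G.IsColoringOn W f)
    (h : S ⊆ W) : G.IsColoringOn S f :=
  fun v hv w hw => hf v (h hv) w (h hw)

theorem chromaticNumberOn_le_card_image {β : Type*} [DecidableEq β] {W : Finset V} {f : V → β}
    (hf : G.IsColoringOn W f) : G.chromaticNumberOn W ≤ #(W.image f) := by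
  let c : (G.induce (W : Set V)).Coloring (W.image f) :=
    Coloring.mk (fun v => ⟨f v, mem_image_of_mem f v.2⟩)
      fun {v w} hvw h => hf v v.2 w w.2 hvw (congrArg Subtype.val h)
  have := c.colorable.chromaticNumber_le
  rw [Fintype.card_coe] at this
  exact ENat.toNat_le_of_le_natCast this

theorem chromaticNumberOn_le_of_isColoringOn {W : Finset V} {f : V → ℕ} {n : ℕ}
    (hf : G.IsColoringOn W f) (hlt : ∀ v ∈ W, f v < n) : G.chromaticNumberOn W ≤ n :=
  (chromaticNumberOn_le_card_image hf).trans <| by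
    simpa using card_le_card (s := W.image f) (t := range n) (by simpa [subset_iff] using hlt)

variable (G) in
theorem exists_isColoringOn (W : Finset V) :
    ∃ f : V → ℕ, G.IsColoringOn W f ∧ ∀ v ∈ W, f v < G.chromaticNumberOn W := by
  classical
  obtain ⟨c⟩ := colorable_chromaticNumber_of_fintype (G.induce (W : Set V))
  refine ⟨fun v => if h : v ∈ W then c ⟨v, h⟩ else 0, fun v hv w hw hvw h => ?_, fun v hv => ?_⟩
  · simp only [hv, hw, dite_true, Fin.val_inj] at h
    exact c.valid (v := ⟨v, hv⟩) (w := ⟨w, hw⟩) hvw h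
  · simp only [dif_pos hv]
    exact (c ⟨v, hv⟩).isLt

theorem chromaticNumberOn_univ [Fintype V] :
    G.chromaticNumberOn univ = G.chromaticNumber.toNat := by
  rw [chromaticNumberOn, coe_univ]
  congr 1
  exact le_antisymm (chromaticNumber_mono_of_hom (induceUnivIso G).toEmbedding.toHom)
    (chromaticNumber_mono_of_hom (induceUnivIso G).symm.toEmbedding.toHom)

theorem chromaticNumberOn_le_card [DecidableEq V] (W : Finset V) :
    G.chromaticNumberOn W ≤ #W := by
  simpa using chromaticNumberOn_le_card_image (G := G) (W := W) (f := id)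
    fun v _ w _ hvw => hvw.ne

theorem chromaticNumberOn_le_one_of_isIndepSet {I : Finset V} (h : G.IsIndepSet (I : Set V)) :
    G.chromaticNumberOn I ≤ 1 :=
  chromaticNumberOn_le_of_isColoringOn (f := fun _ => 0)
    (fun _ hv _ hw hvw => absurd hvw (h (mem_coe.2 hv) (mem_coe.2 hw) hvw.ne)) fun _ _ => one_pos

theorem chromaticNumberOn_union_le [DecidableEq V] (S T : Finset V) :
    G.chromaticNumberOn (S ∪ T) ≤ G.chromaticNumberOn S + G.chromaticNumberOn T := by
  obtain ⟨f, hf, hflt⟩ := G.exists_isColoringOn S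
  obtain ⟨g, hg, hglt⟩ := G.exists_isColoringOn T
  refine chromaticNumberOn_le_of_isColoringOn (f := fun v => if v ∈ S then f v
    else G.chromaticNumberOn S + g v) (fun v hv w hw hvw => ?_) fun v hv => ?_
  · have hv' := (mem_union.1 hv).resolve_left
    have hw' := (mem_union.1 hw).resolve_left
    dsimp only
    split_ifs with h₁ h₂ h₂
    · exact hf v h₁ w h₂ hvw
    · have := hflt v h₁; omega
    · have := hflt w h₂; omega
    · have := hg v (hv' h₁) w (hw' h₂) hvw; omega
  · split_ifs with h
    · exact (hflt v h).trans_le (Nat.le_add_right _ _)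
    · have := hglt v ((mem_union.1 hv).resolve_left h); omega

section Degree

variable [DecidableRel G.Adj]

variable (G) in
def degreeOn (W : Finset V) (v : V) : ℕ := #{w ∈ W | G.Adj v w}

variable (G) in
def maxDegreeOn (W : Finset V) : ℕ := W.sup (G.degreeOn W)

theorem degreeOn_mono {S W : Finset V} (h : S ⊆ W) (v : V) : G.degreeOn S v ≤ G.degreeOn W v :=
  card_le_card (filter_subset_filter _ h)

theorem degreeOn_le_maxDegreeOn {W : Finset V} {v : V} (hv : v ∈ W) :
    G.degreeOn W v ≤ G.maxDegreeOn W :=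
  le_sup hv

theorem exists_degreeOn_eq_maxDegreeOn {W : Finset V} (hW : W.Nonempty) :
    ∃ v ∈ W, G.degreeOn W v = G.maxDegreeOn W := by
  obtain ⟨v, hv, h⟩ := exists_mem_eq_sup W hW (G.degreeOn W)
  exact ⟨v, hv, h.symm⟩

theorem maxDegreeOn_mono {S W : Finset V} (h : S ⊆ W) : G.maxDegreeOn S ≤ G.maxDegreeOn W :=
  Finset.sup_le fun v hv => (degreeOn_mono h v).trans (degreeOn_le_maxDegreeOn (h hv))

theorem maxDegreeOn_le_maxDegree [Fintype V] (W : Finset V) : G.maxDegreeOn W ≤ G.maxDegree :=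
  Finset.sup_le fun v _ => (card_le_card fun w hw => by simpa using (mem_filter.1 hw).2).trans
    (G.degree_le_maxDegree v)

variable [DecidableEq V]

theorem degreeOn_union_le (S T : Finset V) (v : V) :
    G.degreeOn (S ∪ T) v ≤ G.degreeOn S v + G.degreeOn T v := by
  simpa only [degreeOn, filter_union] using card_union_le _ _

theorem degreeOn_union_of_disjoint {S T : Finset V} (h : Disjoint S T) (v : V) :
    G.degreeOn (S ∪ T) v = G.degreeOn S v + G.degreeOn T v := by
  simp only [degreeOn, filter_union]
  exact card_union_of_disjoint (disjoint_filter_filter h)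

theorem card_le_degreeOn_add_degreeOn_compl (W : Finset V) (v : V) :
    #W ≤ G.degreeOn W v + Gᶜ.degreeOn W v + 1 :=
  calc #W ≤ #(insert v ({w ∈ W | G.Adj v w} ∪ {w ∈ W | Gᶜ.Adj v w})) :=
        card_le_card fun w hw => by
          by_cases hvw : v = w
          · simp [hvw]
          · by_cases hadj : G.Adj v w <;> simp [hw, hvw, hadj]
    _ ≤ G.degreeOn W v + Gᶜ.degreeOn W v + 1 :=
        (card_insert_le _ _).trans (Nat.add_le_add_right (card_union_le _ _) 1)

theorem maxDegreeOn_add_le {S W : Finset V} {k : ℕ} (hSW : S ⊆ W) (hS : S.Nonempty)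
    (h : ∀ v ∈ S, k ≤ G.degreeOn (W \ S) v) : G.maxDegreeOn S + k ≤ G.maxDegreeOn W := by
  obtain ⟨v, hv, hvmax⟩ := exists_degreeOn_eq_maxDegreeOn (G := G) hS
  have hsplit := degreeOn_union_of_disjoint (G := G) (S := S) (T := W \ S) disjoint_sdiff v
  rw [union_sdiff_of_subset hSW] at hsplit
  have := degreeOn_le_maxDegreeOn (G := G) (hSW hv)
  have := h v hv
  omega

theorem chromaticNumberOn_insert_le {S : Finset V} {v : V} {n : ℕ}
    (hS : G.chromaticNumberOn S ≤ n) (hv : G.degreeOn S v < n) :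
    G.chromaticNumberOn (insert v S) ≤ n := by
  obtain ⟨f, hf, hlt⟩ := G.exists_isColoringOn S
  obtain ⟨c, hc, hcfree⟩ : ∃ c ∈ range n, c ∉ {w ∈ S | G.Adj v w}.image f :=
    exists_mem_notMem_of_card_lt_card <| by simpa using card_image_le.trans_lt hv
  have hcv : ∀ w ∈ S, G.Adj v w → f w ≠ c := fun w hw hvw h =>
    hcfree (mem_image.2 ⟨w, mem_filter.2 ⟨hw, hvw⟩, h⟩)
  refine chromaticNumberOn_le_of_isColoringOn (f := Function.update f v c)
    (fun a ha b hb hab => ?_) fun w hw => ?_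
  · rcases eq_or_ne a v with rfl | hav
    · rw [Function.update_self, Function.update_of_ne hab.ne']
      exact (hcv b (mem_of_mem_insert_of_ne hb hab.ne') hab).symm
    rcases eq_or_ne b v with rfl | hbv
    · rw [Function.update_self, Function.update_of_ne hav]
      exact hcv a (mem_of_mem_insert_of_ne ha hav) hab.symm
    rw [Function.update_of_ne hav, Function.update_of_ne hbv]
    exact hf a (mem_of_mem_insert_of_ne ha hav) b (mem_of_mem_insert_of_ne hb hbv) hab
  · rcases eq_or_ne w v with rfl | hwv
    · simpa using hc
    · rw [Function.update_of_ne hwv]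
      exact (hlt w (mem_of_mem_insert_of_ne hw hwv)).trans_le hS

theorem chromaticNumberOn_le_maxDegreeOn_add_one (W : Finset V) :
    G.chromaticNumberOn W ≤ G.maxDegreeOn W + 1 := by
  induction W using Finset.induction_on with
  | empty => exact (chromaticNumberOn_le_card (G := G) ∅).trans (by simp)
  | insert v S _ ih =>
    refine chromaticNumberOn_insert_le (ih.trans (by grw [maxDegreeOn_mono (subset_insert v S)]))
      (Nat.lt_succ_of_le ?_)
    exact (degreeOn_mono (subset_insert v S) v).trans (degreeOn_le_maxDegreeOn (mem_insert_self v S))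

end Degree

section Clique

variable [DecidableEq V] [DecidableRel G.Adj]

variable (G) in
def cliqueNumOn (W : Finset V) : ℕ :=
  (W.powerset.filter fun t : Finset V => G.IsClique (t : Set V)).sup card

theorem IsClique.card_le_cliqueNumOn {t W : Finset V} (ht : G.IsClique (t : Set V)) (h : t ⊆ W) :
    #t ≤ G.cliqueNumOn W :=
  le_sup (f := card) (mem_filter.2 ⟨mem_powerset.2 h, ht⟩)

variable (G) in
theorem exists_isClique_card_eq_cliqueNumOn (W : Finset V) :
    ∃ t ⊆ W, G.IsClique (t : Set V) ∧ #t = G.cliqueNumOn W := by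
  obtain ⟨t, ht, h⟩ := exists_mem_eq_sup
    (W.powerset.filter fun t : Finset V => G.IsClique (t : Set V)) ⟨∅, by simp⟩ card
  rw [mem_filter, mem_powerset] at ht
  exact ⟨t, ht.1, ht.2, h.symm⟩

theorem cliqueNumOn_mono {S W : Finset V} (h : S ⊆ W) : G.cliqueNumOn S ≤ G.cliqueNumOn W := by
  obtain ⟨t, htS, ht, hcard⟩ := G.exists_isClique_card_eq_cliqueNumOn S
  exact hcard ▸ ht.card_le_cliqueNumOn (htS.trans h)

theorem cliqueNumOn_le_cliqueNum [Fintype V] (W : Finset V) : G.cliqueNumOn W ≤ G.cliqueNum := by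
  obtain ⟨t, -, ht, hcard⟩ := G.exists_isClique_card_eq_cliqueNumOn W
  exact hcard ▸ ht.card_le_cliqueNum

end Clique

variable (G) in
theorem exists_max_isIndepSet [DecidableEq V] (W : Finset V) :
    ∃ I ⊆ W, G.IsIndepSet (I : Set V) ∧ (∀ J ⊆ W, G.IsIndepSet (J : Set V) → #J ≤ #I) ∧
      ∀ v ∈ W \ I, ∃ u ∈ I, G.Adj v u := by
  classical
  obtain ⟨I, hI, hImax⟩ := exists_max_image
    (W.powerset.filter fun I : Finset V => G.IsIndepSet (I : Set V)) card ⟨∅, by simp⟩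
  rw [mem_filter, mem_powerset] at hI
  have hImax' : ∀ J ⊆ W, G.IsIndepSet (J : Set V) → #J ≤ #I := fun J hJW hJ =>
    hImax J (mem_filter.2 ⟨mem_powerset.2 hJW, hJ⟩)
  refine ⟨I, hI.1, hI.2, hImax', fun v hv => ?_⟩
  by_contra! h
  have hvI : G.IsIndepSet (insert v I : Set V) :=
    Set.pairwise_insert.2 ⟨hI.2, fun u hu _ => ⟨h u hu, fun huv => h u hu huv.symm⟩⟩
  have := hImax' (insert v I) (insert_subset (sdiff_subset hv) hI.1) (by simpa using hvI)
  rw [card_insert_of_notMem (mem_sdiff.1 hv).2] at this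
  omega

section Join

variable {A B : Finset V}

theorem disjoint_of_forall_adj (h : ∀ a ∈ A, ∀ b ∈ B, G.Adj a b) : Disjoint A B :=
  Finset.disjoint_left.2 fun a ha hb => (h a ha a hb).ne rfl

variable [DecidableEq V]

theorem chromaticNumberOn_add_chromaticNumberOn_le (h : ∀ a ∈ A, ∀ b ∈ B, G.Adj a b) :
    G.chromaticNumberOn A + G.chromaticNumberOn B ≤ G.chromaticNumberOn (A ∪ B) := by
  obtain ⟨f, hf, hlt⟩ := G.exists_isColoringOn (A ∪ B)
  have hdisj : Disjoint (A.image f) (B.image f) := by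
    refine Finset.disjoint_left.2 fun c hcA hcB => ?_
    obtain ⟨a, ha, rfl⟩ := mem_image.1 hcA
    obtain ⟨b, hb, hab⟩ := mem_image.1 hcB
    exact hf a (mem_union_left _ ha) b (mem_union_right _ hb) (h a ha b hb) hab.symm
  calc G.chromaticNumberOn A + G.chromaticNumberOn B
      ≤ #(A.image f) + #(B.image f) :=
        add_le_add (chromaticNumberOn_le_card_image (hf.mono subset_union_left))
          (chromaticNumberOn_le_card_image (hf.mono subset_union_right))
    _ = #((A ∪ B).image f) := by rw [image_union, card_union_of_disjoint hdisj]
    _ ≤ #(range (G.chromaticNumberOn (A ∪ B))) := card_le_card fun c hc => by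
        obtain ⟨v, hv, rfl⟩ := mem_image.1 hc
        exact mem_range.2 (hlt v hv)
    _ = G.chromaticNumberOn (A ∪ B) := card_range _

variable [DecidableRel G.Adj]

theorem cliqueNumOn_add_cliqueNumOn_le (h : ∀ a ∈ A, ∀ b ∈ B, G.Adj a b) :
    G.cliqueNumOn A + G.cliqueNumOn B ≤ G.cliqueNumOn (A ∪ B) := by
  obtain ⟨s, hsA, hs, hscard⟩ := G.exists_isClique_card_eq_cliqueNumOn A
  obtain ⟨t, htB, ht, htcard⟩ := G.exists_isClique_card_eq_cliqueNumOn B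
  have hst : G.IsClique ((s ∪ t : Finset V) : Set V) := by
    rw [coe_union]
    exact Set.pairwise_union.2 ⟨hs, ht, fun a ha b hb _ =>
      ⟨h a (hsA ha) b (htB hb), (h a (hsA ha) b (htB hb)).symm⟩⟩
  rw [← hscard, ← htcard, ← card_union_of_disjoint ((disjoint_of_forall_adj h).mono hsA htB)]
  exact hst.card_le_cliqueNumOn (union_subset_union hsA htB)

theorem maxDegreeOn_add_card_le (hA : A.Nonempty) (h : ∀ a ∈ A, ∀ b ∈ B, G.Adj a b) :
    G.maxDegreeOn A + #B ≤ G.maxDegreeOn (A ∪ B) := by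
  refine maxDegreeOn_add_le subset_union_left hA fun a ha => ?_
  rw [union_sdiff_cancel_left (disjoint_of_forall_adj h), degreeOn, filter_true_of_mem (h a ha)]

end Join

section Antimatching

/-- A matching of `Gᶜ` on `W`, encoded as an involution of `W` whose fixed points are the
unmatched vertices. -/
structure IsAntimatching (G : SimpleGraph V) (W : Finset V) (f : V → V) : Prop where
  mapsTo : ∀ v ∈ W, f v ∈ W
  apply_apply : ∀ v ∈ W, f (f v) = v
  compl_adj : ∀ v ∈ W, f v ≠ v → Gᶜ.Adj v (f v)

variable {W : Finset V} {f : V → V} {a b : V}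

theorem IsAntimatching.injOn (hf : G.IsAntimatching W f) : Set.InjOn f W :=
  fun v hv w hw h => by rw [← hf.apply_apply v hv, h, hf.apply_apply w hw]

variable [DecidableEq V]

structure IsMaxAntimatching (G : SimpleGraph V) (W : Finset V) (f : V → V) : Prop
    extends G.IsAntimatching W f where
  card_fixed_le : ∀ g, G.IsAntimatching W g → #{v ∈ W | f v = v} ≤ #{v ∈ W | g v = v}

variable (G) in
theorem exists_isMaxAntimatching [Fintype V] (W : Finset V) : ∃ f, G.IsMaxAntimatching W f := by
  classical
  obtain ⟨f, hf, hmin⟩ := exists_min_image {f : V → V | G.IsAntimatching W f}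
    (fun f => #{v ∈ W | f v = v})
    ⟨id, mem_filter.2 ⟨mem_univ _, fun v hv => hv, fun _ _ => rfl, fun _ _ h => (h rfl).elim⟩⟩
  exact ⟨f, (mem_filter.1 hf).2, fun g hg => hmin g (mem_filter.2 ⟨mem_univ _, hg⟩)⟩

namespace IsAntimatching

variable (hf : G.IsAntimatching W f)
include hf

theorem swap_comp_of_fixed (ha : a ∈ W) (hb : b ∈ W) (hfa : f a = a) (hfb : f b = b)
    (hab : Gᶜ.Adj a b) : G.IsAntimatching W (Equiv.swap a b ∘ f) ∧
      #{v ∈ W | Equiv.swap a b (f v) = v} + 2 = #{v ∈ W | f v = v} := by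
  have hne : ∀ v ∈ W, v ≠ a → v ≠ b → f v ≠ a ∧ f v ≠ b := fun v hv hva hvb =>
    ⟨hfa ▸ hf.injOn.ne hv ha hva, hfb ▸ hf.injOn.ne hv hb hvb⟩
  have key : ∀ v ∈ W, v ≠ a → v ≠ b → Equiv.swap a b (f v) = f v := fun v hv hva hvb =>
    Equiv.swap_apply_of_ne_of_ne (hne v hv hva hvb).1 (hne v hv hva hvb).2
  constructor
  · refine ⟨fun v hv => ?_, fun v hv => ?_, fun v hv hgv => ?_⟩
    all_goals by_cases hva : v = a; · simp [hva, hfa, hfb, hb, hab]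
    all_goals by_cases hvb : v = b; · simp [hvb, hfa, hfb, ha, hab.symm]
    · simpa only [Function.comp_apply, key v hv hva hvb] using hf.mapsTo v hv
    · simp only [Function.comp_apply, key v hv hva hvb]
      rw [key _ (hf.mapsTo v hv) (hne v hv hva hvb).1 (hne v hv hva hvb).2, hf.apply_apply v hv]
    · simp only [Function.comp_apply, key v hv hva hvb] at hgv ⊢
      exact hf.compl_adj v hv hgv
  have hfix : {v ∈ W | Equiv.swap a b (f v) = v} = ({v ∈ W | f v = v}.erase a).erase b := by
    ext v
    by_cases hva : v = a; · simp [hva, hfa, hab.ne.symm]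
    by_cases hvb : v = b; · simp [hvb, hfb, hab.ne]
    simp only [mem_filter, mem_erase, hva, hvb, ne_eq, not_false_eq_true, true_and]
    exact and_congr_right fun hv => by rw [key v hv hva hvb]
  have h₁ := card_erase_add_one (s := {v ∈ W | f v = v}) (mem_filter.2 ⟨ha, hfa⟩)
  have h₂ := card_erase_add_one (s := {v ∈ W | f v = v}.erase a)
    (mem_erase.2 ⟨hab.ne.symm, mem_filter.2 ⟨hb, hfb⟩⟩)
  rw [hfix]
  omega

theorem swap_comp_apply_self (ha : a ∈ W) (hfa : f a ≠ a) :
    G.IsAntimatching W (Equiv.swap a (f a) ∘ f) ∧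
      #{v ∈ W | Equiv.swap a (f a) (f v) = v} = #{v ∈ W | f v = v} + 2 := by
  have hb := hf.mapsTo a ha
  have hfb := hf.apply_apply a ha
  have hne : ∀ v ∈ W, v ≠ a → v ≠ f a → f v ≠ a ∧ f v ≠ f a := fun v hv hva hvb =>
    ⟨hfb ▸ hf.injOn.ne hv hb hvb, hf.injOn.ne hv ha hva⟩
  have key : ∀ v ∈ W, v ≠ a → v ≠ f a → Equiv.swap a (f a) (f v) = f v := fun v hv hva hvb =>
    Equiv.swap_apply_of_ne_of_ne (hne v hv hva hvb).1 (hne v hv hva hvb).2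
  constructor
  · refine ⟨fun v hv => ?_, fun v hv => ?_, fun v hv hgv => ?_⟩
    all_goals by_cases hva : v = a; · simp_all
    all_goals by_cases hvb : v = f a; · simp_all
    · simpa only [Function.comp_apply, key v hv hva hvb] using hf.mapsTo v hv
    · simp only [Function.comp_apply, key v hv hva hvb]
      rw [key _ (hf.mapsTo v hv) (hne v hv hva hvb).1 (hne v hv hva hvb).2, hf.apply_apply v hv]
    · simp only [Function.comp_apply, key v hv hva hvb] at hgv ⊢
      exact hf.compl_adj v hv hgv
  have hfix : {v ∈ W | Equiv.swap a (f a) (f v) = v} =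
      insert a (insert (f a) {v ∈ W | f v = v}) := by
    ext v
    by_cases hva : v = a; · simp [hva, ha]
    by_cases hvb : v = f a; · simp [hvb, hb, hfb]
    simp only [mem_filter, mem_insert, hva, hvb, false_or]
    exact and_congr_right fun hv => by rw [key v hv hva hvb]
  rw [hfix, card_insert_of_notMem (by simp [Ne.symm hfa, hfa]),
    card_insert_of_notMem (by simp [hfb, Ne.symm hfa])]

theorem two_mul_chromaticNumberOn_le : 2 * G.chromaticNumberOn W ≤ #W + #{v ∈ W | f v = v} := by
  let c : V → Sym2 V := fun v => s(v, f v)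
  have hc : G.IsColoringOn W c := by
    intro v hv w _ hvw h
    rcases Sym2.eq_iff.1 h with ⟨rfl, -⟩ | ⟨-, rfl⟩
    · exact hvw.ne rfl
    · exact ((G.compl_adj _ _).1 (hf.compl_adj v hv hvw.ne')).2 hvw
  set R := {v ∈ W | f v = v}
  set M := {v ∈ W | ¬f v = v}
  -- each pair `s(v, f v)` with `v` matched is the colour of two vertices
  have hM : 2 * #(M.image c) ≤ #M := by
    refine mul_card_image_le_card _ 2 fun b hb => ?_
    obtain ⟨v, hv, rfl⟩ := mem_image.1 hb
    have hv' := mem_filter.1 hv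
    have hfv : f v ∈ M := by
      simp [M, hf.mapsTo v hv'.1, hf.apply_apply v hv'.1, Ne.symm hv'.2]
    calc 2 = #{v, f v} := (card_pair (Ne.symm hv'.2)).symm
      _ ≤ #{u ∈ M | c u = c v} := card_le_card <| insert_subset (mem_filter.2 ⟨hv, rfl⟩) <|
          singleton_subset_iff.2 <| mem_filter.2
            ⟨hfv, by simp [c, hf.apply_apply v hv'.1, Sym2.eq_swap]⟩
  have hR : #(R.image c) ≤ #R := card_image_le
  have hRM : #R + #M = #W := card_filter_add_card_filter_not _
  calc 2 * G.chromaticNumberOn W ≤ 2 * #(W.image c) :=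
        Nat.mul_le_mul_left 2 (chromaticNumberOn_le_card_image hc)
    _ ≤ 2 * (#(R.image c) + #(M.image c)) := by
        rw [← filter_union_filter_not_eq (fun v => f v = v) W, image_union]
        exact Nat.mul_le_mul_left 2 (card_union_le _ _)
    _ ≤ #W + #R := by omega

end IsAntimatching

namespace IsMaxAntimatching

variable (hf : G.IsMaxAntimatching W f)
include hf

theorem adj_of_fixed (ha : a ∈ W) (hb : b ∈ W) (hfa : f a = a) (hfb : f b = b) (hab : a ≠ b) :
    G.Adj a b := by
  by_contra h
  obtain ⟨hg, hcard⟩ := hf.swap_comp_of_fixed ha hb hfa hfb ((G.compl_adj a b).2 ⟨hab, h⟩)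
  have := hf.card_fixed_le _ hg
  simp only [Function.comp_apply] at this
  omega

/-- Otherwise `ρ, x, f x, ρ'` is an augmenting path: unmatching `x` and matching it with `ρ` gives
another maximum antimatching, in which `f x` and `ρ'` are fixed and not adjacent. -/
theorem eq_of_compl_adj {x ρ ρ' : V} (hx : x ∈ W) (hfx : f x ≠ x) (hρ : ρ ∈ W) (hfρ : f ρ = ρ)
    (hρ' : ρ' ∈ W) (hfρ' : f ρ' = ρ') (h : Gᶜ.Adj x ρ) (h' : Gᶜ.Adj (f x) ρ') : ρ = ρ' := by
  by_contra hne
  have hρx : ρ ≠ f x := fun hρ => h.ne (by rw [← hf.apply_apply x hx, ← hρ, hfρ])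
  have hρ'x : ρ' ≠ x := fun hρ' => hfx (hρ' ▸ hfρ')
  obtain ⟨hf₁, hc₁⟩ := hf.swap_comp_apply_self hx hfx
  obtain ⟨hf₂, hc₂⟩ := hf₁.swap_comp_of_fixed hx hρ (by simp)
    (by simp [hfρ, Equiv.swap_apply_of_ne_of_ne h.ne.symm hρx]) h
  have hmax : G.IsMaxAntimatching W (Equiv.swap x ρ ∘ Equiv.swap x (f x) ∘ f) := by
    refine ⟨hf₂, fun g hg => ?_⟩
    have := hf.card_fixed_le g hg
    simp only [Function.comp_apply] at hc₁ hc₂ ⊢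
    omega
  refine (G.compl_adj _ _).1 h' |>.2 (hmax.adj_of_fixed (hf.mapsTo x hx) hρ' ?_ ?_ h'.ne)
  · simp [hf.apply_apply x hx, Equiv.swap_apply_of_ne_of_ne hfx (Ne.symm hρx)]
  · simp [hfρ', Equiv.swap_apply_of_ne_of_ne hρ'x h'.ne.symm,
      Equiv.swap_apply_of_ne_of_ne hρ'x (Ne.symm hne)]

end IsMaxAntimatching

end Antimatching

section IndependenceNumberTwo

variable [DecidableEq V] [DecidableRel G.Adj] {W : Finset V} {f : V → V}

variable (G) in
def adjFixedOn (W : Finset V) (f : V → V) : Finset V :=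
  {x ∈ W | f x ≠ x ∧ ∀ ρ ∈ W, f ρ = ρ → G.Adj x ρ}

theorem mem_adjFixedOn {x : V} :
    x ∈ G.adjFixedOn W f ↔ x ∈ W ∧ f x ≠ x ∧ ∀ ρ ∈ W, f ρ = ρ → G.Adj x ρ :=
  mem_filter

theorem adjFixedOn_subset : G.adjFixedOn W f ⊆ {v ∈ W | f v ≠ v} :=
  fun _ hx => mem_filter.2 ⟨(mem_adjFixedOn.1 hx).1, (mem_adjFixedOn.1 hx).2.1⟩

theorem exists_card_le_two_mul_degreeOn_compl_add {P M : Finset V} (hPW : P ⊆ W) (hPM : P ⊆ M)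
    (hP : P.Nonempty) (hM : #M ≤ 2 * #P) (hnbr : ∀ p ∈ P, ∀ x ∈ W, Gᶜ.Adj p x → x ∈ M) :
    ∃ z ∈ M, #W ≤ 2 * Gᶜ.degreeOn P z + G.maxDegreeOn W + 1 := by
  -- otherwise double counting the non-edges between `P` and `M \ P` contradicts `hM`
  by_contra! h
  set Δ := G.maxDegreeOn W
  set Q := M \ P
  have hQ : #Q ≤ #P := by rw [card_sdiff_of_subset hPM]; omega
  have hPQ : ∀ p ∈ P, #W - Δ ≤ 2 * Gᶜ.degreeOn Q p := fun p hp => by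
    have h₁ := G.card_le_degreeOn_add_degreeOn_compl W p
    have h₂ : Gᶜ.degreeOn W p ≤ Gᶜ.degreeOn (P ∪ Q) p := by
      rw [union_sdiff_of_subset hPM]
      exact card_le_card fun x hx =>
        mem_filter.2 ⟨hnbr p hp x (mem_filter.1 hx).1 (mem_filter.1 hx).2, (mem_filter.1 hx).2⟩
    have h₃ := degreeOn_union_le (G := Gᶜ) P Q p
    have h₄ := degreeOn_le_maxDegreeOn (G := G) (hPW hp)
    have h₅ := h p (hPM hp)
    omega
  have hQP : ∀ x ∈ Q, 2 * Gᶜ.degreeOn P x ≤ #W - Δ - 2 := fun x hx => by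
    have := h x (sdiff_subset hx)
    omega
  have hcount : ∑ p ∈ P, Gᶜ.degreeOn Q p = ∑ x ∈ Q, Gᶜ.degreeOn P x := by
    simpa only [degreeOn, bipartiteAbove, bipartiteBelow, Gᶜ.adj_comm] using
      sum_card_bipartiteAbove_eq_sum_card_bipartiteBelow (s := P) (t := Q) (r := Gᶜ.Adj)
  obtain ⟨p, hp⟩ := hP
  have hΔ := h p (hPM hp)
  have : #P * (#W - Δ) ≤ #P * (#W - Δ - 2) := calc
    #P * (#W - Δ) ≤ ∑ p ∈ P, 2 * Gᶜ.degreeOn Q p := by simpa using card_nsmul_le_sum P _ _ hPQ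
    _ = ∑ x ∈ Q, 2 * Gᶜ.degreeOn P x := by rw [← mul_sum, ← mul_sum, hcount]
    _ ≤ #Q * (#W - Δ - 2) := by simpa using sum_le_card_nsmul Q _ _ hQP
    _ ≤ #P * (#W - Δ - 2) := Nat.mul_le_mul_right _ hQ
  have := Nat.le_of_mul_le_mul_left this (card_pos.2 ⟨p, hp⟩)
  omega

namespace IsMaxAntimatching

variable (hf : G.IsMaxAntimatching W f)
  (hα : ∀ a ∈ W, ∀ b ∈ W, ∀ c ∈ W, Gᶜ.Adj a b → Gᶜ.Adj a c → ¬Gᶜ.Adj b c)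
include hf hα

theorem apply_mem_adjFixedOn {x : V} (hx : x ∈ W) (hfx : f x ≠ x) (hxP : x ∉ G.adjFixedOn W f) :
    f x ∈ G.adjFixedOn W f := by
  have hy := hf.mapsTo x hx
  have hfy := hf.apply_apply x hx
  obtain ⟨ρ, hρ, hfρ, hxρ⟩ : ∃ ρ ∈ W, f ρ = ρ ∧ ¬G.Adj x ρ := by
    simpa [mem_adjFixedOn, hx, hfx] using hxP
  refine mem_adjFixedOn.2 ⟨hy, by rw [hfy]; exact Ne.symm hfx, fun ρ' hρ' hfρ' => ?_⟩
  by_contra hyρ'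
  have hxρ : Gᶜ.Adj x ρ := (G.compl_adj _ _).2 ⟨fun h => hfx (h ▸ hfρ), hxρ⟩
  have hyρ' : Gᶜ.Adj (f x) ρ' :=
    (G.compl_adj _ _).2 ⟨fun h => hfx (by rw [h, hfρ'] at hfy; rw [h, hfy]), hyρ'⟩
  obtain rfl := hf.eq_of_compl_adj hx hfx hρ hfρ hρ' hfρ' hxρ hyρ'
  exact hα x hx (f x) hy ρ hρ (hf.compl_adj x hx hfx) hxρ hyρ'

theorem card_moved_le : #{v ∈ W | f v ≠ v} ≤ 2 * #(G.adjFixedOn W f) := by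
  have : #({v ∈ W | f v ≠ v} \ G.adjFixedOn W f) ≤ #(G.adjFixedOn W f) :=
    card_le_card_of_injOn f (fun x hx => by
      obtain ⟨hxM, hxP⟩ := mem_sdiff.1 hx
      exact hf.apply_mem_adjFixedOn hα (mem_filter.1 hxM).1 (mem_filter.1 hxM).2 hxP)
      (hf.injOn.mono fun x hx => (mem_filter.1 (mem_sdiff.1 hx).1).1)
  rw [card_sdiff_of_subset adjFixedOn_subset] at this
  omega

theorem card_fixed_add_degreeOn_compl_le {z : V} (hz : z ∈ W) :
    #{v ∈ W | f v = v} + Gᶜ.degreeOn (G.adjFixedOn W f) z ≤ G.cliqueNumOn W := by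
  set R := {v ∈ W | f v = v}
  set N := {x ∈ G.adjFixedOn W f | Gᶜ.Adj z x}
  have hR : ∀ a ∈ R, a ∈ W ∧ f a = a := fun a ha => by simpa [R] using ha
  have hN : ∀ b ∈ N, (b ∈ W ∧ f b ≠ b ∧ ∀ ρ ∈ W, f ρ = ρ → G.Adj b ρ) ∧ Gᶜ.Adj z b :=
    fun b hb => by simpa [N, mem_adjFixedOn] using hb
  have hclique : G.IsClique ((R ∪ N : Finset V) : Set V) := by
    rw [coe_union]
    refine Set.pairwise_union.2 ⟨fun a ha b hb hab => ?_, fun a ha b hb hab => ?_,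
      fun a ha b hb _ => ?_⟩
    · exact hf.adj_of_fixed (hR a ha).1 (hR b hb).1 (hR a ha).2 (hR b hb).2 hab
    · by_contra h
      exact hα z hz a (hN a ha).1.1 b (hN b hb).1.1 (hN a ha).2 (hN b hb).2
        ((G.compl_adj _ _).2 ⟨hab, h⟩)
    · have := (hN b hb).1.2.2 a (hR a ha).1 (hR a ha).2
      exact ⟨this.symm, this⟩
  have hdisj : Disjoint R N :=
    Finset.disjoint_left.2 fun a ha hb => (hN a hb).1.2.1 (hR a ha).2
  rw [degreeOn, ← card_union_of_disjoint hdisj]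
  exact hclique.card_le_cliqueNumOn (union_subset (filter_subset _ _)
    ((filter_subset _ _).trans (filter_subset _ _)))

end IsMaxAntimatching

theorem four_mul_chromaticNumberOn_le_of_compl_triangleFree [Fintype V]
    (hα : ∀ a ∈ W, ∀ b ∈ W, ∀ c ∈ W, Gᶜ.Adj a b → Gᶜ.Adj a c → ¬Gᶜ.Adj b c) :
    4 * G.chromaticNumberOn W ≤ 2 * G.cliqueNumOn W + G.maxDegreeOn W + #W + 1 := by
  obtain ⟨f, hf⟩ := G.exists_isMaxAntimatching W
  have hχ := hf.two_mul_chromaticNumberOn_le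
  suffices ∃ q, #{v ∈ W | f v = v} + q ≤ G.cliqueNumOn W ∧ #W ≤ 2 * q + G.maxDegreeOn W + 1 by
    omega
  rcases (G.adjFixedOn W f).eq_empty_or_nonempty with hP | hP
  · rcases W.eq_empty_or_nonempty with rfl | ⟨z, hz⟩
    · exact ⟨0, by simp⟩
    -- every vertex is fixed, so `W` is a clique
    have hfix : ∀ v ∈ W, f v = v := by
      have := hf.card_moved_le hα
      rw [hP, card_empty, mul_zero, Nat.le_zero, card_eq_zero, filter_eq_empty_iff] at this
      simpa using this
    refine ⟨0, by simpa [hP, degreeOn] using hf.card_fixed_add_degreeOn_compl_le hα hz, ?_⟩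
    have hcompl : Gᶜ.degreeOn W z = 0 := card_eq_zero.2 <| filter_eq_empty_iff.2 fun x hx hzx =>
      ((G.compl_adj _ _).1 hzx).2 (hf.adj_of_fixed hz hx (hfix z hz) (hfix x hx) hzx.ne)
    have := G.card_le_degreeOn_add_degreeOn_compl W z
    have := degreeOn_le_maxDegreeOn (G := G) hz
    omega
  · obtain ⟨z, hz, hzW⟩ := exists_card_le_two_mul_degreeOn_compl_add
      (fun x hx => (mem_adjFixedOn.1 hx).1) adjFixedOn_subset hP (hf.card_moved_le hα)
      fun p hp x hx hpx => mem_filter.2 ⟨hx, fun hfx =>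
        ((G.compl_adj _ _).1 hpx).2 ((mem_adjFixedOn.1 hp).2.2 x hx hfx)⟩
    exact ⟨_, hf.card_fixed_add_degreeOn_compl_le hα (mem_filter.1 hz).1, hzW⟩

end IndependenceNumberTwo

section MainBound

variable [Fintype V] [DecidableEq V] [DecidableRel G.Adj]

theorem four_mul_chromaticNumberOn_le (W : Finset V) :
    4 * G.chromaticNumberOn W ≤ 2 * G.cliqueNumOn W + G.maxDegreeOn W + #W + 1 := by
  induction W using Finset.strongInduction with | _ W ih =>
  obtain ⟨I, hIW, hI, hImax, hdom⟩ := G.exists_max_isIndepSet W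
  by_cases hI2 : #I ≤ 2
  · refine four_mul_chromaticNumberOn_le_of_compl_triangleFree fun a ha b hb c hc hab hac hbc => ?_
    have h3 : Gᶜ.IsNClique 3 {a, b, c} := is3Clique_triple_iff.2 ⟨hab, hac, hbc⟩
    have := hImax {a, b, c} (by simp [insert_subset_iff, ha, hb, hc])
      ((isClique_compl G).1 h3.isClique)
    rw [h3.card_eq] at this
    omega
  have hsplit : W = I ∪ (W \ I) := (union_sdiff_of_subset hIW).symm
  have hcard : #W = #I + #(W \ I) := by rw [← card_union_of_disjoint disjoint_sdiff, ← hsplit]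
  have hχ : G.chromaticNumberOn W ≤ 1 + G.chromaticNumberOn (W \ I) := by
    conv_lhs => rw [hsplit]
    exact (chromaticNumberOn_union_le _ _).trans
      (Nat.add_le_add_right (chromaticNumberOn_le_one_of_isIndepSet hI) _)
  have hIH := ih (W \ I) (sdiff_ssubset hIW (card_pos.1 (by omega)))
  have hω := cliqueNumOn_mono (G := G) (sdiff_subset (s := W) (t := I))
  rcases (W \ I).eq_empty_or_nonempty with hW' | hW'
  · have := chromaticNumberOn_le_card (G := G) (∅ : Finset V)
    rw [hW', card_empty] at hcard
    rw [hW'] at hχ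
    rw [card_empty] at this
    omega
  have hΔ : G.maxDegreeOn (W \ I) + 1 ≤ G.maxDegreeOn W := by
    refine maxDegreeOn_add_le sdiff_subset hW' fun v hv => ?_
    rw [Finset.sdiff_sdiff_eq_self hIW]
    obtain ⟨u, hu, hvu⟩ := hdom v hv
    exact card_pos.2 ⟨u, mem_filter.2 ⟨hu, hvu⟩⟩
  omega

theorem four_mul_chromaticNumberOn_add_card_le {S W : Finset V} (hSW : S ⊆ W) :
    4 * G.chromaticNumberOn W + #S ≤
      2 * G.cliqueNumOn W + G.maxDegreeOn W + #W + 1 + 3 * G.chromaticNumberOn S := by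
  induction hn : #(W \ S) generalizing S with
  | zero =>
    obtain rfl : S = W := hSW.antisymm (sdiff_eq_empty_iff_subset.1 (card_eq_zero.1 hn))
    have := G.chromaticNumberOn_le_maxDegreeOn_add_one S
    omega
  | succ n ih =>
    by_cases h : ∃ v ∈ W \ S, G.degreeOn S v < G.chromaticNumberOn S
    · obtain ⟨v, hv, hvS⟩ := h
      obtain ⟨hvW, hvS'⟩ := mem_sdiff.1 hv
      have := ih (insert_subset hvW hSW) (by rw [sdiff_insert, card_erase_of_mem hv, hn]; rfl)
      have := chromaticNumberOn_insert_le le_rfl hvS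
      rw [card_insert_of_notMem hvS'] at *
      omega
    · push Not at h
      have hT : (W \ S).Nonempty := card_pos.1 (by omega)
      have hχ : G.chromaticNumberOn W ≤ G.chromaticNumberOn S + G.chromaticNumberOn (W \ S) := by
        conv_lhs => rw [← union_sdiff_of_subset hSW]
        exact chromaticNumberOn_union_le _ _
      have hΔ : G.maxDegreeOn (W \ S) + G.chromaticNumberOn S ≤ G.maxDegreeOn W :=
        maxDegreeOn_add_le sdiff_subset hT fun v hv => by
          rw [Finset.sdiff_sdiff_eq_self hSW]
          exact h v hv
      have := four_mul_chromaticNumberOn_le (G := G) (W \ S)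
      have := cliqueNumOn_mono (G := G) (sdiff_subset (s := W) (t := S))
      have := card_sdiff_add_card_eq_card hSW
      omega

theorem four_mul_add_card_le_of_forall_adj {A B S : Finset V} (hA : A.Nonempty)
    (hB : B.Nonempty) (hAB : ∀ a ∈ A, ∀ b ∈ B, G.Adj a b) (hS : S ⊆ A ∪ B) :
    4 * (G.chromaticNumberOn A + G.chromaticNumberOn B) + #S ≤
      2 * G.cliqueNumOn (A ∪ B) + 2 * G.maxDegreeOn (A ∪ B) + 2 + 3 * G.chromaticNumberOn S := by
  have hSAB : S ∩ A ∪ S ∩ B = S := by rw [← inter_union_distrib_left, inter_eq_left.2 hS]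
  have hχS : G.chromaticNumberOn (S ∩ A) + G.chromaticNumberOn (S ∩ B) ≤
      G.chromaticNumberOn S :=
    calc _ ≤ G.chromaticNumberOn (S ∩ A ∪ S ∩ B) := chromaticNumberOn_add_chromaticNumberOn_le
          fun a ha b hb => hAB a (mem_inter.1 ha).2 b (mem_inter.1 hb).2
      _ = G.chromaticNumberOn S := by rw [hSAB]
  have hcard : #(S ∩ A) + #(S ∩ B) = #S :=
    calc _ = #(S ∩ A ∪ S ∩ B) := (card_union_of_disjoint
          ((disjoint_of_forall_adj hAB).mono inter_subset_right inter_subset_right)).symm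
      _ = #S := by rw [hSAB]
  have := four_mul_chromaticNumberOn_add_card_le (G := G) (inter_subset_right (s₁ := S) (s₂ := A))
  have := four_mul_chromaticNumberOn_add_card_le (G := G) (inter_subset_right (s₁ := S) (s₂ := B))
  have := cliqueNumOn_add_cliqueNumOn_le hAB
  have := maxDegreeOn_add_card_le hA hAB
  have := maxDegreeOn_add_card_le hB fun b hb a ha => (hAB a ha b hb).symm
  rw [union_comm] at this
  omega

end MainBound

theorem exists_forall_adj_of_isCutSet_compl [Fintype V] [DecidableEq V] {K : Finset V}
    (hK : Gᶜ.IsCutSet K) :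
    ∃ A B : Finset V, A.Nonempty ∧ B.Nonempty ∧ A ∪ B = Kᶜ ∧ ∀ a ∈ A, ∀ b ∈ B, G.Adj a b := by
  classical
  set H := Gᶜ.induce ((K : Set V)ᶜ)
  obtain ⟨a, b, hab⟩ : ∃ a b, ¬H.Reachable a b := by
    simpa [IsCutSet, Preconnected] using hK
  -- `A` is the component of `a` in `Gᶜ - K`
  let A : Finset V := {v | ∃ h : v ∉ K, H.Reachable a ⟨v, h⟩}
  have hAK : A ⊆ Kᶜ := fun v hv => by
    obtain ⟨h, -⟩ := (mem_filter.1 hv).2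
    exact mem_compl.2 h
  refine ⟨A, Kᶜ \ A, ⟨a, mem_filter.2 ⟨mem_univ _, a.2, .rfl⟩⟩, ⟨b, mem_sdiff.2
    ⟨mem_compl.2 b.2, fun hb => hab ?_⟩⟩, union_sdiff_of_subset hAK, fun x hx y hy => ?_⟩
  · obtain ⟨_, h⟩ := (mem_filter.1 hb).2
    exact h
  obtain ⟨hx', hxa⟩ := (mem_filter.1 hx).2
  obtain ⟨hy', hyA⟩ := mem_sdiff.1 hy
  by_contra hxy
  have hne : x ≠ y := fun h => hyA (h ▸ hx)
  have hc : H.Adj ⟨x, hx'⟩ ⟨y, mem_compl.1 hy'⟩ := (G.compl_adj x y).2 ⟨hne, hxy⟩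
  exact hyA (mem_filter.2 ⟨mem_univ _, mem_compl.1 hy', hxa.trans hc.reachable⟩)

end SimpleGraph

open SimpleGraph

theorem chromatic_bound_with_cutset_and_induced_subgraph_general {V : Type*} [Fintype V] [DecidableEq V]
    (G : SimpleGraph V) [DecidableRel G.Adj]
    (K : Finset V) (hK : Gᶜ.IsCutSet K)
    (s : Finset V) :
    (G.chromaticNumber.toNat : ℝ) ≤
      (1 / 2) * ((G.cliqueNum : ℝ) + (G.maxDegree : ℝ) + 1) +
      (4 * ((G.induce (K : Set V)).chromaticNumber.toNat : ℝ)
        + 3 * ((G.induce ((s \ K : Finset V) : Set V)).chromaticNumber.toNat : ℝ)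
        - ((s \ K).card : ℝ)) / 4 := by
  obtain ⟨A, B, hA, hB, hAB, hadj⟩ := exists_forall_adj_of_isCutSet_compl hK
  have hχ : G.chromaticNumber.toNat ≤
      G.chromaticNumberOn K + (G.chromaticNumberOn A + G.chromaticNumberOn B) := by
    rw [← chromaticNumberOn_univ, ← union_compl K, ← hAB]
    exact (chromaticNumberOn_union_le _ _).trans
      (Nat.add_le_add_left (chromaticNumberOn_union_le _ _) _)
  have hS : s \ K ⊆ A ∪ B := hAB ▸ fun v hv => mem_compl.2 (mem_sdiff.1 hv).2
  have := four_mul_add_card_le_of_forall_adj hA hB hadj hS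
  have := G.cliqueNumOn_le_cliqueNum (A ∪ B)
  have := G.maxDegreeOn_le_maxDegree (A ∪ B)
  have key : 4 * G.chromaticNumber.toNat + #(s \ K) ≤ 2 * G.cliqueNum + 2 * G.maxDegree + 2 +
      4 * G.chromaticNumberOn K + 3 * G.chromaticNumberOn (s \ K) := by
    omega
  have := (Nat.cast_le (α := ℝ)).2 key
  push_cast [chromaticNumberOn] at this
  linarith

/-- Let `G` be a finite simple graph, `K` a cut-set in the complement of `G`, and
`H = G[s]` a (non-empty) induced subgraph of `G`.  Then
`χ(G) ≤ (1/2) (ω(G) + Δ(G) + 1) + (4 χ(G[K]) + 3 χ(H ∖ K) − |H ∖ K|)/4`. -/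
theorem chromatic_bound_with_cutset_and_induced_subgraph {V : Type*} [Fintype V] [DecidableEq V] [Nonempty V]
    (G : SimpleGraph V) [DecidableRel G.Adj]
    (K : Finset V) (hK : Gᶜ.IsCutSet K)
    (s : Finset V) (hs : s.Nonempty) :
    (G.chromaticNumber.toNat : ℝ) ≤
      (1 / 2) * ((G.cliqueNum : ℝ) + (G.maxDegree : ℝ) + 1) +
      (4 * ((G.induce (K : Set V)).chromaticNumber.toNat : ℝ)
        + 3 * ((G.induce ((s \ K : Finset V) : Set V)).chromaticNumber.toNat : ℝ)
        - ((s \ K).card : ℝ)) / 4 :=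
  chromatic_bound_with_cutset_and_induced_subgraph_general G K hK s
end
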